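/- Let u, v, ζ be nonzero complex numbers with |u²| < 1; set q = u² and t = v². Assume |u^{−1} v ζ| < 1, 1 − u^{−1} v ζ ≠ 0, 1 − u v^{−1} ζ ≠ 0, and u v^{−1} ∉ {q^{−l} : l ≥ 0}. Then (1 − ζ) · ₂φ₁(u² v^{−2}, u³ v^{−1}; u v^{−1}; q, u^{−1} v ζ) = [(1 − ζ²) / ((1 − u^{−1} v ζ)(1 − u v^{−1} ζ))] · (u v^{−1} ζ;q)_∞ / (u v ζ;q)_∞. (In the notation of the paper: the n = 2 quasi-eigenfunction F(α) = (1−ζ)·₂φ₁(qt^{−1}, αqt^{−1}; α^{−1}q; q, α^{−1}tζ) at α = q^{1/2}t^{1/2} = uv equals the 2×2 Pfaffian factor times the infinite product (q^{1/2}t^{−1/2}ζ;q)_∞/(q^{1/2}t^{1/2}ζ;q)_∞.) -/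

import Mathlib

/-- The q-shifted factorial `(a;q)_n = ∏_{k=0}^{n−1} (1 − a q^k)`. -/
noncomputable def qp (q a : ℂ) (n : ℕ) : ℂ := ∏ k ∈ Finset.range n, (1 - a * q ^ k)

/-- The infinite q-shifted factorial `(a;q)_∞ = ∏_{k=0}^{∞} (1 − a q^k)`. -/
noncomputable def qpInf (q a : ℂ) : ℂ := ∏' k : ℕ, (1 - a * q ^ k)

/-- The basic hypergeometric series `₂φ₁(a,b;c;q,z)`. -/
noncomputable def phi21 (a b c q z : ℂ) : ℂ :=
  ∑' n : ℕ, qp q a n * qp q b n / (qp q c n * qp q q n) * z ^ n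

open Finset Filter

section Aux

/-- The `₁φ₀` series whose sum is given by the `q`-binomial theorem. -/
noncomputable def FF (q a z : ℂ) : ℂ := ∑' n : ℕ, qp q a n / qp q q n * z ^ n

/-- Uniform bound for the coefficients of `FF`. -/
noncomputable def C₀ (q a : ℂ) : ℝ :=
  Real.exp (‖a‖ * (1 - ‖q‖)⁻¹) * Real.exp (‖q‖ * (1 - ‖q‖)⁻¹ * (1 - ‖q‖)⁻¹)

variable {q a z w : ℂ}

lemma one_sub_ne_zero_of_norm_lt (h : ‖w‖ < 1) : (1 : ℂ) - w ≠ 0 := by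
  intro h0; rw [sub_eq_zero] at h0; rw [← h0] at h; simp at h

lemma norm_pow_le_one (hq : ‖q‖ < 1) (k : ℕ) : ‖q ^ k‖ ≤ 1 := by
  rw [norm_pow]; exact pow_le_one₀ (norm_nonneg q) hq.le

lemma norm_mul_pow_le (hq : ‖q‖ < 1) (k : ℕ) : ‖w * q ^ k‖ ≤ ‖w‖ := by
  rw [norm_mul]
  calc ‖w‖ * ‖q ^ k‖ ≤ ‖w‖ * 1 :=
        mul_le_mul_of_nonneg_left (norm_pow_le_one hq k) (norm_nonneg w)
    _ = ‖w‖ := mul_one _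

lemma norm_mul_pow_lt (hq : ‖q‖ < 1) (hw : ‖w‖ < 1) (k : ℕ) : ‖w * q ^ k‖ < 1 :=
  lt_of_le_of_lt (norm_mul_pow_le hq k) hw

/-- Key inequality: if `0 ≤ x ≤ m < 1` then `exp (-(x/(1-m))) ≤ 1 - x`. -/
lemma exp_neg_le_one_sub {x m : ℝ} (hx : 0 ≤ x) (hxm : x ≤ m) (hm : m < 1) :
    Real.exp (-(x * (1 - m)⁻¹)) ≤ 1 - x := by
  have h0 : (0:ℝ) < 1 - m := by linarith
  have hx1 : (0:ℝ) < 1 - x := by linarith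
  have h1 : x * (1 - m)⁻¹ + 1 ≤ Real.exp (x * (1 - m)⁻¹) := Real.add_one_le_exp _
  have key : 1 ≤ (1 - x) * Real.exp (x * (1 - m)⁻¹) := by
    have h2 : (1 - x) * (x * (1 - m)⁻¹ + 1) ≤ (1 - x) * Real.exp (x * (1 - m)⁻¹) :=
      mul_le_mul_of_nonneg_left h1 hx1.le
    have h3 : 1 ≤ (1 - x) * (x * (1 - m)⁻¹ + 1) := by
      have h4 : (1 - m) * (1 - m)⁻¹ = 1 := mul_inv_cancel₀ h0.ne'
      nlinarith [mul_nonneg hx (inv_nonneg.mpr h0.le), inv_nonneg.mpr h0.le]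
    linarith
  rw [Real.exp_neg, inv_eq_one_div, div_le_iff₀ (Real.exp_pos _)]
  linarith

lemma geom_partial_le (hq : ‖q‖ < 1) (n : ℕ) :
    ∑ k ∈ range n, ‖q‖ ^ k ≤ (1 - ‖q‖)⁻¹ := by
  calc ∑ k ∈ range n, ‖q‖ ^ k ≤ ∑' k : ℕ, ‖q‖ ^ k :=
        Summable.sum_le_tsum _ (fun k _ => pow_nonneg (norm_nonneg q) k)
          (summable_geometric_of_lt_one (norm_nonneg q) hq)
    _ = (1 - ‖q‖)⁻¹ := tsum_geometric_of_lt_one (norm_nonneg q) hq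

lemma qp_norm_le (hq : ‖q‖ < 1) (n : ℕ) :
    ‖qp q a n‖ ≤ Real.exp (‖a‖ * (1 - ‖q‖)⁻¹) := by
  calc ‖qp q a n‖ = ∏ k ∈ range n, ‖1 - a * q ^ k‖ := norm_prod _ _
    _ ≤ ∏ k ∈ range n, Real.exp (‖a‖ * ‖q‖ ^ k) := by
        apply Finset.prod_le_prod (fun k _ => norm_nonneg _)
        intro k _
        calc ‖1 - a * q ^ k‖ ≤ ‖(1:ℂ)‖ + ‖a * q ^ k‖ := norm_sub_le _ _
          _ = 1 + ‖a‖ * ‖q‖ ^ k := by rw [norm_one, norm_mul, norm_pow]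
          _ ≤ Real.exp (‖a‖ * ‖q‖ ^ k) := by
              have := Real.add_one_le_exp (‖a‖ * ‖q‖ ^ k); linarith
    _ = Real.exp (∑ k ∈ range n, ‖a‖ * ‖q‖ ^ k) := (Real.exp_sum _ _).symm
    _ ≤ Real.exp (‖a‖ * (1 - ‖q‖)⁻¹) := by
        apply Real.exp_le_exp.mpr
        rw [← Finset.mul_sum]
        exact mul_le_mul_of_nonneg_left (geom_partial_le hq n) (norm_nonneg a)

lemma qp_norm_ge (hq : ‖q‖ < 1) (hw : ‖w‖ < 1) (n : ℕ) :
    Real.exp (-(‖w‖ * (1 - ‖q‖)⁻¹ * (1 - ‖w‖)⁻¹)) ≤ ‖qp q w n‖ := by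
  have step : ∀ k : ℕ, Real.exp (-(‖w‖ * ‖q‖ ^ k * (1 - ‖w‖)⁻¹)) ≤ ‖1 - w * q ^ k‖ := by
    intro k
    have hx : (0:ℝ) ≤ ‖w‖ * ‖q‖ ^ k := mul_nonneg (norm_nonneg w) (pow_nonneg (norm_nonneg q) k)
    have hxm : ‖w‖ * ‖q‖ ^ k ≤ ‖w‖ := by rw [← norm_pow, ← norm_mul]; exact norm_mul_pow_le hq k
    calc Real.exp (-(‖w‖ * ‖q‖ ^ k * (1 - ‖w‖)⁻¹)) ≤ 1 - ‖w‖ * ‖q‖ ^ k :=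
          exp_neg_le_one_sub hx hxm hw
      _ = 1 - ‖w * q ^ k‖ := by rw [norm_mul, norm_pow]
      _ = ‖(1:ℂ)‖ - ‖w * q ^ k‖ := by rw [norm_one]
      _ ≤ ‖1 - w * q ^ k‖ := norm_sub_norm_le _ _
  calc Real.exp (-(‖w‖ * (1 - ‖q‖)⁻¹ * (1 - ‖w‖)⁻¹))
      ≤ Real.exp (-(∑ k ∈ range n, ‖w‖ * ‖q‖ ^ k * (1 - ‖w‖)⁻¹)) := by
        apply Real.exp_le_exp.mpr
        apply neg_le_neg
        have : ∑ k ∈ range n, ‖w‖ * ‖q‖ ^ k * (1 - ‖w‖)⁻¹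
            = (∑ k ∈ range n, ‖q‖ ^ k) * (‖w‖ * (1 - ‖w‖)⁻¹) := by
          rw [Finset.sum_mul]; apply Finset.sum_congr rfl; intro k _; ring
        rw [this]
        have h1 : (0:ℝ) ≤ ‖w‖ * (1 - ‖w‖)⁻¹ :=
          mul_nonneg (norm_nonneg w) (inv_nonneg.mpr (by linarith))
        calc (∑ k ∈ range n, ‖q‖ ^ k) * (‖w‖ * (1 - ‖w‖)⁻¹)
            ≤ (1 - ‖q‖)⁻¹ * (‖w‖ * (1 - ‖w‖)⁻¹) :=
              mul_le_mul_of_nonneg_right (geom_partial_le hq n) h1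
          _ = ‖w‖ * (1 - ‖q‖)⁻¹ * (1 - ‖w‖)⁻¹ := by ring
    _ = ∏ k ∈ range n, Real.exp (-(‖w‖ * ‖q‖ ^ k * (1 - ‖w‖)⁻¹)) := by
        rw [← Real.exp_sum, ← Finset.sum_neg_distrib]
    _ ≤ ∏ k ∈ range n, ‖1 - w * q ^ k‖ := by
        apply Finset.prod_le_prod (fun k _ => (Real.exp_pos _).le) (fun k _ => step k)
    _ = ‖qp q w n‖ := (norm_prod _ _).symm

lemma C₀_pos (q a : ℂ) : 0 < C₀ q a := mul_pos (Real.exp_pos _) (Real.exp_pos _)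

lemma qp_q_eq (n : ℕ) : qp q q n = ∏ k ∈ range n, (1 - q * q ^ k) := rfl

lemma qp_q_ne_zero (hq : ‖q‖ < 1) (n : ℕ) : qp q q n ≠ 0 := by
  rw [qp]
  apply Finset.prod_ne_zero_iff.mpr
  intro k _
  exact one_sub_ne_zero_of_norm_lt (norm_mul_pow_lt hq hq k)

lemma g_norm_le (hq : ‖q‖ < 1) (n : ℕ) : ‖qp q a n / qp q q n‖ ≤ C₀ q a := by
  rw [norm_div]
  have hlow := qp_norm_ge (w := q) hq hq n
  have hup := qp_norm_le (a := a) hq n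
  have hpos : (0:ℝ) < Real.exp (-(‖q‖ * (1 - ‖q‖)⁻¹ * (1 - ‖q‖)⁻¹)) := Real.exp_pos _
  calc ‖qp q a n‖ / ‖qp q q n‖
      ≤ Real.exp (‖a‖ * (1 - ‖q‖)⁻¹) / Real.exp (-(‖q‖ * (1 - ‖q‖)⁻¹ * (1 - ‖q‖)⁻¹)) :=
        div_le_div₀ (Real.exp_pos _).le hup hpos hlow
    _ = C₀ q a := by rw [Real.exp_neg, C₀, div_eq_mul_inv, inv_inv]

lemma summable_main (hq : ‖q‖ < 1) (hz : ‖z‖ < 1) :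
    Summable (fun n => qp q a n / qp q q n * z ^ n) := by
  apply Summable.of_norm_bounded (g := fun n => C₀ q a * ‖z‖ ^ n)
    ((summable_geometric_of_lt_one (norm_nonneg z) hz).mul_left _)
  intro n
  rw [norm_mul, norm_pow]
  exact mul_le_mul_of_nonneg_right (g_norm_le hq n) (pow_nonneg (norm_nonneg z) n)

lemma key_rec (hq : ‖q‖ < 1) (n : ℕ) :
    qp q a (n + 1) / qp q q (n + 1) * (1 - q ^ (n + 1))
      = qp q a n / qp q q n * (1 - a * q ^ n) := by
  have e1 : qp q a (n + 1) = qp q a n * (1 - a * q ^ n) := Finset.prod_range_succ _ _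
  have e2 : qp q q (n + 1) = qp q q n * (1 - q ^ (n + 1)) := by
    rw [qp, Finset.prod_range_succ, ← qp_q_eq]
    congr 2
    rw [← pow_succ']
  have h1 : qp q q n ≠ 0 := qp_q_ne_zero hq n
  have h3 : (1:ℂ) - q ^ (n + 1) ≠ 0 := by
    have : ‖q ^ (n+1)‖ < 1 := by
      rw [pow_succ']
      exact norm_mul_pow_lt hq hq n
    exact one_sub_ne_zero_of_norm_lt this
  rw [e1, e2]
  field_simp

lemma norm_q_mul_lt (hq : ‖q‖ < 1) (hz : ‖z‖ < 1) : ‖q * z‖ < 1 := by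
  rw [norm_mul]
  calc ‖q‖ * ‖z‖ ≤ 1 * ‖z‖ := mul_le_mul_of_nonneg_right hq.le (norm_nonneg z)
    _ = ‖z‖ := one_mul _
    _ < 1 := hz

/-- The functional equation `(1-z) F(z) = (1-az) F(qz)` for the `₁φ₀` series. -/
lemma funeq (hq : ‖q‖ < 1) (hz : ‖z‖ < 1) :
    (1 - z) * FF q a z = (1 - a * z) * FF q a (q * z) := by
  set gg : ℕ → ℂ := fun n => qp q a n / qp q q n with hgg
  have hz' : ‖q * z‖ < 1 := norm_q_mul_lt hq hz
  have S1 : Summable (fun n => gg n * z ^ n) := summable_main hq hz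
  have S2 : Summable (fun n => gg n * (q * z) ^ n) := summable_main hq hz'
  set B : ℕ → ℂ := fun n => gg n * (1 - a * q ^ n) * z ^ (n + 1) with hB
  set C : ℕ → ℂ := fun n => gg n * (1 - q ^ n) * z ^ n with hC
  have hCB : ∀ n, C (n + 1) = B n := by
    intro n
    show gg (n+1) * (1 - q ^ (n+1)) * z ^ (n+1) = gg n * (1 - a * q ^ n) * z ^ (n+1)
    have := key_rec (a := a) hq n
    linear_combination z ^ (n+1) * this
  have SC : Summable C := by
    apply Summable.of_norm_bounded (g := fun n => (2 * C₀ q a) * ‖z‖ ^ n)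
      ((summable_geometric_of_lt_one (norm_nonneg z) hz).mul_left _)
    intro n
    show ‖gg n * (1 - q ^ n) * z ^ n‖ ≤ 2 * C₀ q a * ‖z‖ ^ n
    rw [norm_mul, norm_mul, norm_pow]
    have h1 : ‖(1:ℂ) - q ^ n‖ ≤ 2 := by
      calc ‖(1:ℂ) - q ^ n‖ ≤ ‖(1:ℂ)‖ + ‖q ^ n‖ := norm_sub_le _ _
        _ ≤ 1 + 1 := by rw [norm_one]; exact add_le_add_right (norm_pow_le_one hq n) 1
        _ = 2 := by norm_num
    have h2 : ‖gg n‖ * ‖(1:ℂ) - q ^ n‖ ≤ C₀ q a * 2 :=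
      mul_le_mul (g_norm_le hq n) h1 (norm_nonneg _) (C₀_pos q a).le
    calc ‖gg n‖ * ‖(1:ℂ) - q ^ n‖ * ‖z‖ ^ n ≤ C₀ q a * 2 * ‖z‖ ^ n :=
          mul_le_mul_of_nonneg_right h2 (pow_nonneg (norm_nonneg z) n)
      _ = 2 * C₀ q a * ‖z‖ ^ n := by ring
  have SB : Summable B := ((summable_nat_add_iff 1).mpr SC).congr hCB
  have sumCB : ∑' n, C n = ∑' n, B n := by
    rw [Summable.tsum_eq_zero_add SC]
    have hC0 : C 0 = 0 := by simp [hC]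
    rw [hC0, zero_add]
    exact tsum_congr hCB
  have expand : (1 - z) * FF q a z - (1 - a * z) * FF q a (q * z)
      = ∑' n, (C n - B n) := by
    rw [show FF q a z = ∑' n, gg n * z ^ n from rfl,
        show FF q a (q * z) = ∑' n, gg n * (q * z) ^ n from rfl,
        ← tsum_mul_left, ← tsum_mul_left, ← Summable.tsum_sub (S1.mul_left _) (S2.mul_left _)]
    apply tsum_congr
    intro n
    show (1 - z) * (gg n * z ^ n) - (1 - a * z) * (gg n * (q * z) ^ n)
        = gg n * (1 - q ^ n) * z ^ n - gg n * (1 - a * q ^ n) * z ^ (n + 1)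
    rw [mul_pow]
    ring
  have : (1 - z) * FF q a z - (1 - a * z) * FF q a (q * z) = 0 := by
    rw [expand, Summable.tsum_sub SC SB, sumCB, sub_self]
  exact sub_eq_zero.mp this

lemma norm_pow_mul_le (hq : ‖q‖ < 1) (N : ℕ) : ‖q ^ N * z‖ ≤ ‖z‖ := by
  rw [norm_mul]
  calc ‖q ^ N‖ * ‖z‖ ≤ 1 * ‖z‖ :=
        mul_le_mul_of_nonneg_right (norm_pow_le_one hq N) (norm_nonneg z)
    _ = ‖z‖ := one_mul _

lemma iter (hq : ‖q‖ < 1) (hz : ‖z‖ < 1) (N : ℕ) :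
    qp q z N * FF q a z = qp q (a * z) N * FF q a (q ^ N * z) := by
  induction N with
  | zero => simp [qp]
  | succ N ih =>
    have hzN : ‖q ^ N * z‖ < 1 := lt_of_le_of_lt (norm_pow_mul_le hq N) hz
    have fe := funeq (a := a) hq hzN
    have e1 : qp q z (N + 1) = qp q z N * (1 - z * q ^ N) := Finset.prod_range_succ _ _
    have e2 : qp q (a * z) (N + 1) = qp q (a * z) N * (1 - a * z * q ^ N) :=
      Finset.prod_range_succ _ _
    rw [e1, e2, show q ^ (N + 1) * z = q * (q ^ N * z) by ring]
    linear_combination (1 - z * q ^ N) * ih + qp q (a * z) N * fe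

lemma FF_tail (hq : ‖q‖ < 1) (hz : ‖z‖ < 1) :
    ‖FF q a z - 1‖ ≤ C₀ q a * ‖z‖ * (1 - ‖z‖)⁻¹ := by
  have S1 : Summable (fun n => qp q a n / qp q q n * z ^ n) := summable_main hq hz
  have h0 : qp q a 0 / qp q q 0 * z ^ 0 = 1 := by simp [qp]
  rw [show FF q a z = ∑' n : ℕ, qp q a n / qp q q n * z ^ n from rfl,
    Summable.tsum_eq_zero_add S1, h0, add_sub_cancel_left]
  have hgeom : HasSum (fun n : ℕ => C₀ q a * ‖z‖ * ‖z‖ ^ n) (C₀ q a * ‖z‖ * (1 - ‖z‖)⁻¹) :=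
    (hasSum_geometric_of_lt_one (norm_nonneg z) hz).mul_left _
  have hgeom' : HasSum (fun n : ℕ => C₀ q a * ‖z‖ ^ (n + 1)) (C₀ q a * ‖z‖ * (1 - ‖z‖)⁻¹) := by
    have e : (fun n : ℕ => C₀ q a * ‖z‖ ^ (n + 1)) = fun n : ℕ => C₀ q a * ‖z‖ * ‖z‖ ^ n := by
      funext n; rw [pow_succ']; ring
    rw [e]; exact hgeom
  apply tsum_of_norm_bounded hgeom'
  intro n
  rw [norm_mul, norm_pow]
  exact mul_le_mul_of_nonneg_right (g_norm_le hq _) (pow_nonneg (norm_nonneg z) _)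

lemma FF_lim (hq : ‖q‖ < 1) (hz : ‖z‖ < 1) :
    Tendsto (fun N => FF q a (q ^ N * z)) atTop (nhds 1) := by
  have key : ∀ N : ℕ, ‖FF q a (q ^ N * z) - 1‖ ≤ (C₀ q a * ‖z‖ * (1 - ‖z‖)⁻¹) * ‖q‖ ^ N := by
    intro N
    have hzN : ‖q ^ N * z‖ < 1 := lt_of_le_of_lt (norm_pow_mul_le hq N) hz
    calc ‖FF q a (q ^ N * z) - 1‖ ≤ C₀ q a * ‖q ^ N * z‖ * (1 - ‖q ^ N * z‖)⁻¹ :=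
          FF_tail hq hzN
      _ ≤ (C₀ q a * ‖z‖ * (1 - ‖z‖)⁻¹) * ‖q‖ ^ N := by
          have h1 : ‖q ^ N * z‖ = ‖q‖ ^ N * ‖z‖ := by rw [norm_mul, norm_pow]
          have h2 : (1 - ‖q ^ N * z‖)⁻¹ ≤ (1 - ‖z‖)⁻¹ := by
            apply inv_anti₀ (by linarith)
            have := norm_pow_mul_le (z := z) hq N
            linarith
          have h3 : (0:ℝ) ≤ C₀ q a * ‖q ^ N * z‖ :=
            mul_nonneg (C₀_pos q a).le (norm_nonneg _)
          calc C₀ q a * ‖q ^ N * z‖ * (1 - ‖q ^ N * z‖)⁻¹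
              ≤ C₀ q a * ‖q ^ N * z‖ * (1 - ‖z‖)⁻¹ :=
                mul_le_mul_of_nonneg_left h2 h3
            _ = (C₀ q a * ‖z‖ * (1 - ‖z‖)⁻¹) * ‖q‖ ^ N := by rw [h1]; ring
  have hb : Tendsto (fun N : ℕ => (C₀ q a * ‖z‖ * (1 - ‖z‖)⁻¹) * ‖q‖ ^ N) atTop (nhds 0) := by
    have := tendsto_pow_atTop_nhds_zero_of_lt_one (norm_nonneg q) hq
    simpa using this.const_mul (C₀ q a * ‖z‖ * (1 - ‖z‖)⁻¹)
  have hnorm : Tendsto (fun N => ‖FF q a (q ^ N * z) - 1‖) atTop (nhds 0) :=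
    squeeze_zero (fun N => norm_nonneg _) key hb
  rw [tendsto_iff_norm_sub_tendsto_zero]
  exact hnorm

lemma log_summable (hq : ‖q‖ < 1) (w : ℂ) :
    Summable (fun n : ℕ => Complex.log (1 - w * q ^ n)) := by
  have hgeo : Summable (fun n : ℕ => 3 / 2 * (‖w‖ * ‖q‖ ^ n)) := by
    apply Summable.mul_left
    exact (summable_geometric_of_lt_one (norm_nonneg q) hq).mul_left _
  apply Summable.of_norm_bounded_eventually_nat (g := fun n => 3 / 2 * (‖w‖ * ‖q‖ ^ n)) hgeo
  have htend : Tendsto (fun n : ℕ => ‖w‖ * ‖q‖ ^ n) atTop (nhds 0) := by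
    simpa using (tendsto_pow_atTop_nhds_zero_of_lt_one (norm_nonneg q) hq).const_mul ‖w‖
  have hev : ∀ᶠ n : ℕ in atTop, ‖w‖ * ‖q‖ ^ n ≤ 1 / 2 :=
    htend.eventually_le_const (by norm_num)
  filter_upwards [hev] with n hn
  have hwq : ‖-(w * q ^ n)‖ ≤ 1 / 2 := by
    rw [norm_neg, norm_mul, norm_pow]; exact hn
  have := Complex.norm_log_one_add_half_le_self hwq
  rw [show (1 : ℂ) + -(w * q ^ n) = 1 - w * q ^ n by ring] at this
  calc ‖Complex.log (1 - w * q ^ n)‖ ≤ 3 / 2 * ‖-(w * q ^ n)‖ := this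
    _ = 3 / 2 * (‖w‖ * ‖q‖ ^ n) := by rw [norm_neg, norm_mul, norm_pow]

lemma hasProd_qp (hq : ‖q‖ < 1) : HasProd (fun k : ℕ => 1 - w * q ^ k) (qpInf q w) := by
  by_cases h : ∀ k : ℕ, 1 - w * q ^ k ≠ 0
  · exact (Complex.multipliable_of_summable_log (log_summable hq w)).hasProd
  · push_neg at h
    obtain ⟨k₀, hk⟩ := h
    have hp : HasProd (fun k : ℕ => 1 - w * q ^ k) 0 := by
      rw [HasProd]
      apply tendsto_const_nhds.congr'
      filter_upwards [eventually_ge_atTop ({k₀} : Finset ℕ)] with s hs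
      exact (Finset.prod_eq_zero (hs (Finset.mem_singleton_self k₀)) hk).symm
    have : qpInf q w = 0 := hp.tprod_eq
    rw [this]
    exact hp

lemma qpInf_ne_zero (hq : ‖q‖ < 1) (h : ∀ k : ℕ, 1 - w * q ^ k ≠ 0) : qpInf q w ≠ 0 := by
  have e := Complex.cexp_tsum_eq_tprod (f := fun n => 1 - w * q ^ n)
    (fun n => h n) (log_summable hq w)
  rw [qpInf, ← e]
  exact Complex.exp_ne_zero _

lemma qpInf_ne_zero' (hq : ‖q‖ < 1) (hw : ‖w‖ < 1) : qpInf q w ≠ 0 :=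
  qpInf_ne_zero hq (fun k => one_sub_ne_zero_of_norm_lt (norm_mul_pow_lt hq hw k))

lemma qpInf_peel (hq : ‖q‖ < 1) : qpInf q w = (1 - w) * qpInf q (q * w) := by
  have h1 : (fun n : ℕ => 1 - w * q ^ (n + 1)) = fun n : ℕ => 1 - q * w * q ^ n := by
    funext n; rw [pow_succ']; ring
  have hm : Multipliable (fun n : ℕ => 1 - w * q ^ (n + 1)) := by
    rw [h1]; exact (hasProd_qp hq).multipliable
  rw [qpInf, tprod_eq_zero_mul' (f := fun k : ℕ => 1 - w * q ^ k) hm]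
  congr 1
  · simp
  · rw [h1]; rfl

/-- The `q`-binomial theorem (product form). -/
lemma qbinom (hq : ‖q‖ < 1) (hz : ‖z‖ < 1) :
    qpInf q z * FF q a z = qpInf q (a * z) := by
  have t1 : Tendsto (fun N => qp q z N * FF q a z) atTop (nhds (qpInf q z * FF q a z)) :=
    ((hasProd_qp hq).tendsto_prod_nat).mul_const _
  have t2 : Tendsto (fun N => qp q (a * z) N * FF q a (q ^ N * z)) atTop
      (nhds (qpInf q (a * z) * 1)) :=
    ((hasProd_qp hq).tendsto_prod_nat).mul (FF_lim hq hz)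
  have := tendsto_nhds_unique (t1.congr (fun N => iter hq hz N)) t2
  rw [mul_one] at this
  exact this

lemma qp_shift (q c : ℂ) (n : ℕ) :
    qp q (q * c) n * (1 - c) = qp q c n * (1 - c * q ^ n) := by
  have h1 := Finset.prod_range_succ (fun k => 1 - c * q ^ k) n
  have h2 := Finset.prod_range_succ' (fun k => 1 - c * q ^ k) n
  have e : (∏ x ∈ range n, (1 - c * q ^ (x + 1))) = qp q (q * c) n := by
    rw [qp]; apply Finset.prod_congr rfl; intro x _; rw [pow_succ']; ring
  calc qp q (q * c) n * (1 - c)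
      = (∏ x ∈ range n, (1 - c * q ^ (x + 1))) * (1 - c * q ^ 0) := by
        rw [e]; norm_num
    _ = ∏ x ∈ range (n + 1), (1 - c * q ^ x) := h2.symm
    _ = qp q c n * (1 - c * q ^ n) := h1

/-- The main identity, in generic form. -/
lemma main_id {q c z ζ : ℂ} (hq : ‖q‖ < 1) (hz : ‖z‖ < 1)
    (hzeta : c * z = ζ)
    (hc : ∀ l : ℕ, 1 - c * q ^ l ≠ 0)
    (h2 : 1 - z ≠ 0) (h3 : 1 - c ^ 2 * z ≠ 0) :
    (1 - ζ) * phi21 (c ^ 2) (q * c) c q z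
      = (1 - ζ ^ 2) / ((1 - z) * (1 - c ^ 2 * z)) *
          (qpInf q (c ^ 2 * z) / qpInf q (q * z)) := by
  subst hzeta
  have hc1 : (1 : ℂ) - c ≠ 0 := by have := hc 0; simpa using this
  have hq2 : ‖q * z‖ < 1 := norm_q_mul_lt hq hz
  have hcn : ∀ n, qp q c n ≠ 0 := fun n =>
    Finset.prod_ne_zero_iff.mpr (fun k _ => hc k)
  have S1 : Summable (fun n => qp q (c ^ 2) n / qp q q n * z ^ n) := summable_main hq hz
  have S2 : Summable (fun n => qp q (c ^ 2) n / qp q q n * (q * z) ^ n) :=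
    summable_main hq hq2
  have stepA : phi21 (c ^ 2) (q * c) c q z
      = (1 - c)⁻¹ * (FF q (c ^ 2) z - c * FF q (c ^ 2) (q * z)) := by
    rw [phi21, show FF q (c ^ 2) z = ∑' n : ℕ, qp q (c ^ 2) n / qp q q n * z ^ n from rfl,
      show FF q (c ^ 2) (q * z) = ∑' n : ℕ, qp q (c ^ 2) n / qp q q n * (q * z) ^ n from rfl,
      ← tsum_mul_left (a := c), ← Summable.tsum_sub S1 (S2.mul_left c), ← tsum_mul_left]
    apply tsum_congr
    intro n
    have hr : qp q (q * c) n = qp q c n * (1 - c * q ^ n) / (1 - c) := by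
      field_simp
      linear_combination qp_shift q c n
    rw [hr, mul_pow]
    have hqn := qp_q_ne_zero hq n
    field_simp [hc1, hcn n, hqn]
  have n1 : qpInf q z ≠ 0 := qpInf_ne_zero' hq hz
  have n2 : qpInf q (q * z) ≠ 0 := qpInf_ne_zero' hq hq2
  have b1 : qpInf q z * FF q (c ^ 2) z = qpInf q (c ^ 2 * z) := qbinom hq hz
  have b2 : qpInf q (q * z) * FF q (c ^ 2) (q * z) = qpInf q (q * (c ^ 2 * z)) := by
    rw [show q * (c ^ 2 * z) = c ^ 2 * (q * z) by ring]
    exact qbinom hq hq2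
  have p1 : qpInf q z = (1 - z) * qpInf q (q * z) := qpInf_peel hq
  have p2 : qpInf q (c ^ 2 * z) = (1 - c ^ 2 * z) * qpInf q (q * (c ^ 2 * z)) := qpInf_peel hq
  have f1 : FF q (c ^ 2) z = (1 - c ^ 2 * z) * qpInf q (q * (c ^ 2 * z)) / qpInf q z := by
    rw [← p2, ← b1]; field_simp
  have f2 : FF q (c ^ 2) (q * z) = qpInf q (q * (c ^ 2 * z)) / qpInf q (q * z) := by
    rw [← b2]; field_simp
  rw [stepA, f1, f2, p2, p1]
  field_simp
  ring

end Aux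

/-- With `q = u²`, `t = v²`, `α = uv`:
`(1 − ζ)·₂φ₁(u²v⁻², u³v⁻¹; uv⁻¹; q, u⁻¹vζ)
= (1 − ζ²)/((1 − u⁻¹vζ)(1 − uv⁻¹ζ)) · (uv⁻¹ζ;q)_∞/(uvζ;q)_∞`. -/
theorem statement17 (u v ζ : ℂ) (hu : u ≠ 0) (hv : v ≠ 0) (hζ : ζ ≠ 0)
    (hq : ‖u ^ 2‖ < 1)
    (h1 : ‖u⁻¹ * v * ζ‖ < 1)
    (h2 : 1 - u⁻¹ * v * ζ ≠ 0) (h3 : 1 - u * v⁻¹ * ζ ≠ 0)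
    (h4 : ∀ l : ℕ, u * v⁻¹ ≠ ((u ^ 2) ^ l)⁻¹) :
    (1 - ζ) *
        phi21 (u ^ 2 * (v ^ 2)⁻¹) (u ^ 3 * v⁻¹) (u * v⁻¹) (u ^ 2) (u⁻¹ * v * ζ)
      = (1 - ζ ^ 2) / ((1 - u⁻¹ * v * ζ) * (1 - u * v⁻¹ * ζ)) *
          (qpInf (u ^ 2) (u * v⁻¹ * ζ) / qpInf (u ^ 2) (u * v * ζ)) := by
  have hqn : ‖u ^ 2‖ < 1 := by exact hq
  have hzn : ‖u⁻¹ * v * ζ‖ < 1 := by exact h1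
  have hzeta : (u * v⁻¹) * (u⁻¹ * v * ζ) = ζ := by field_simp
  have hc : ∀ l : ℕ, 1 - (u * v⁻¹) * (u ^ 2) ^ l ≠ 0 := by
    intro l h
    rw [sub_eq_zero] at h
    exact h4 l (eq_inv_of_mul_eq_one_left h.symm)
  have h3' : 1 - (u * v⁻¹) ^ 2 * (u⁻¹ * v * ζ) ≠ 0 := by
    rw [show (u * v⁻¹) ^ 2 * (u⁻¹ * v * ζ) = u * v⁻¹ * ζ by field_simp]
    exact h3
  have key := main_id hqn hzn hzeta hc h2 h3'
  rw [show u ^ 2 * (v ^ 2)⁻¹ = (u * v⁻¹) ^ 2 by ring,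
    show u ^ 3 * v⁻¹ = u ^ 2 * (u * v⁻¹) by ring,
    show u * v⁻¹ * ζ = (u * v⁻¹) ^ 2 * (u⁻¹ * v * ζ) by field_simp,
    show u * v * ζ = u ^ 2 * (u⁻¹ * v * ζ) by field_simp]
  exact key
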